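/- Define B₀ = 01 over the alphabet {0,1,2,3} and B_{n+1} = B_n · 23 · B_n^R. Then for every n ≥ 0, every palindromic factor of B_n lies in {ε, 0, 1, 2, 3}; that is, B_n contains no palindromic factor of length ≥ 2. -/

import Mathlib

def IsFactor {α : Type*} (y x : List α) : Prop := ∃ u v, x = u ++ y ++ v

def IsPal {α : Type*} (y : List α) : Prop := y.reverse = y

/-- `B 0 = 01`, `B (n+1) = B n ++ 23 ++ (B n)^R` over the alphabet `{0,1,2,3}`. -/
def B : ℕ → List (Fin 4)
  | 0 => [0, 1]
  | n + 1 => B n ++ [2, 3] ++ (B n).reverse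

/-!
A palindrome of length at least two has a palindromic centre `aa` or `aba`, so it suffices to
show that `B n` has no factor of either shape. Such a factor has length at most three, so in
`B (n+1) = B n ++ 23 ++ (B n)^R` it lies in `B n`, in `(B n)^R` (whose short palindromic
factors are reversals of those of `B n`), or in one of the windows `e23`, `23e^R` around the
two seams, where `e` is the suffix of length two of `B n`. As `B n` begins with `01`, `B (n+1)`
ends with `10`, so `e` is `01` or `10`, and none of `0123`, `2310`, `1023`, `2301` contains `aa`
or `aba`.
-/

theorem List.infix_append_of_length_le_succ {α : Type*} {p xs ys s t : List α} {k : ℕ}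
    (hp : p <:+: xs ++ ys) (hpk : p.length ≤ k + 1)
    (hs : s <:+ xs) (hsk : k ≤ s.length) (ht : t <+: ys) (htk : k ≤ t.length) :
    p <:+: xs ∨ p <:+: ys ∨ p <:+: s ++ t := by
  rcases List.infix_append_iff_ne_nil.1 hp with h | h | ⟨l₁, l₂, h₁, h₂, rfl, hl₁, hl₂⟩
  · exact .inl h
  · exact .inr (.inl h)
  · have hlen₁ := List.length_pos_iff.2 h₁
    have hlen₂ := List.length_pos_iff.2 h₂
    rw [List.length_append] at hpk
    refine .inr (.inr (List.infix_append_iff.2 (.inr (.inr ⟨l₁, l₂, rfl, ?_, ?_⟩))))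
    · exact List.suffix_of_suffix_length_le hl₁ hs (by omega)
    · exact List.prefix_of_prefix_length_le hl₂ ht (by omega)

def ShortPalFree {α : Type*} (w : List α) : Prop :=
  ∀ a b : α, ¬ [a, a] <:+: w ∧ ¬ [a, b, a] <:+: w

instance {α : Type*} [Fintype α] [DecidableEq α] (w : List α) : Decidable (ShortPalFree w) := by
  unfold ShortPalFree; infer_instance

namespace ShortPalFree

variable {α : Type*}

theorem of_infix {u w : List α} (hw : ShortPalFree w) (huw : u <:+: w) : ShortPalFree u :=
  fun a b => ⟨fun h => (hw a b).1 (h.trans huw), fun h => (hw a b).2 (h.trans huw)⟩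

theorem reverse {w : List α} (hw : ShortPalFree w) : ShortPalFree w.reverse := fun a b =>
  ⟨fun h => (hw a b).1 (by simpa using List.reverse_infix.2 h),
    fun h => (hw a b).2 (by simpa using List.reverse_infix.2 h)⟩

theorem append {xs ys s t : List α} (hxs : ShortPalFree xs) (hys : ShortPalFree ys)
    (hs : s <:+ xs) (hs₂ : 2 ≤ s.length) (ht : t <+: ys) (ht₂ : 2 ≤ t.length)
    (hst : ShortPalFree (s ++ t)) : ShortPalFree (xs ++ ys) := by
  have hwindow : ∀ p : List α, p.length ≤ 3 → p <:+: xs ++ ys →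
      p <:+: xs ∨ p <:+: ys ∨ p <:+: s ++ t := fun p hp h =>
    List.infix_append_of_length_le_succ h hp hs hs₂ ht ht₂
  intro a b
  constructor
  · intro h
    rcases hwindow _ (by simp) h with h | h | h
    exacts [(hxs a b).1 h, (hys a b).1 h, (hst a b).1 h]
  · intro h
    rcases hwindow _ (by simp) h with h | h | h
    exacts [(hxs a b).2 h, (hys a b).2 h, (hst a b).2 h]

end ShortPalFree

theorem List.Palindrome.not_shortPalFree {α : Type*} {u : List α} (hu : u.Palindrome)
    (hlen : 2 ≤ u.length) : ¬ ShortPalFree u := by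
  induction hu with
  | nil | singleton => simp at hlen
  | cons_concat x hl ih =>
    intro hfree
    match hl, ih with
    | .nil, _ => exact (hfree x x).1 (List.infix_refl _)
    | .singleton b, _ => exact (hfree x b).2 (List.infix_refl _)
    | .cons_concat _ _, ih => exact ih (by simp) (hfree.of_infix ⟨[x], [x], by simp⟩)

theorem B_starts_with_01 (n : ℕ) : [0, 1] <+: B n := by
  induction n with
  | zero => exact List.prefix_refl _
  | succ n ih => exact ih.trans ⟨_, (List.append_assoc _ _ _).symm⟩

theorem B_ends_with_01_or_10 (n : ℕ) : [0, 1] <:+ B n ∨ [1, 0] <:+ B n := by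
  cases n with
  | zero => exact .inl (List.suffix_refl _)
  | succ n =>
    exact .inr (List.suffix_append_of_suffix (List.reverse_suffix.2 (B_starts_with_01 n)))

theorem B_shortPalFree (n : ℕ) : ShortPalFree (B n) := by
  induction n with
  | zero => decide
  | succ n ih =>
    have hseams : ∀ e : List (Fin 4), e <:+ B n → e.length = 2 →
        ShortPalFree (e ++ [2, 3]) → ShortPalFree ([2, 3] ++ e.reverse) →
        ShortPalFree (B (n + 1)) := by
      intro e he he₂ hleft hright
      have hfirst_half : ShortPalFree (B n ++ [2, 3]) :=
        ih.append (by decide) he he₂.ge (List.prefix_refl _) le_rfl hleft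
      exact hfirst_half.append ih.reverse (List.suffix_append _ _) le_rfl
        (List.reverse_prefix.2 he) (by simp [he₂]) hright
    rcases B_ends_with_01_or_10 n with h | h <;> exact hseams _ h rfl (by decide) (by decide)

/-- Every palindromic factor of `B n` lies in `{ε, 0, 1, 2, 3}`; i.e., `B n` has no
palindromic factor of length ≥ 2. -/
theorem B_palindromic_factors (n : ℕ) :
    ∀ u : List (Fin 4), IsFactor u (B n) → IsPal u →
      u ∈ ({[], [0], [1], [2], [3]} : Set (List (Fin 4))) := by
  rintro u ⟨s, t, hst⟩ hpal
  have hfree : ShortPalFree u := (B_shortPalFree n).of_infix ⟨s, t, hst.symm⟩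
  match u, hpal, hfree with
  | [], _, _ => simp
  | [a], _, _ => fin_cases a <;> simp
  | _ :: _ :: _, hpal, hfree =>
    exact absurd hfree ((List.Palindrome.of_reverse_eq hpal).not_shortPalFree (by simp))
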